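/- arXiv:math/0512237 — 4 statements merged into one kernel-verified Lean document; each statement's English description precedes it below -/
import Mathlib

section
/- Let σ_1,...,σ_{2g} be the elementary symmetric polynomials in variables ξ_1,...,ξ_{2g}, write σ = σ_{2g} = ξ_1⋯ξ_{2g}, and for 1 ≤ n ≤ 2g−1 define q^g_n(t) = ∏_{1≤i_1<...<i_n≤2g} (1 + ξ_{i_1}⋯ξ_{i_n} t), a polynomial in t of degree b^g_n = C(2g,n) with coefficients in ℤ[ξ_1,...,ξ_{2g}]. Then in ℤ[ξ_1,...,ξ_{2g},σ^{-1}][t,t^{-1}] one has the functional equation q^g_n(1/(σt)) = (σt)^{-b^g_n} · σ^{b^g_n · n/(2g)} · q^g_{2g−n}(t). -/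
/-!
Since `σ = (∏_{i ∈ S} ξ_i) (∏_{i ∉ S} ξ_i)`, each factor of `q^g_n(1/(σt))` splits as
`1 + ξ_S/(σt) = ξ_S/(σt) · (1 + ξ_{Sᶜ} t)`. Taking the product over all `n`-subsets `S`, the
factors `1 + ξ_{Sᶜ} t` run over `q^g_{2g-n}(t)` as `S ↦ Sᶜ` is a bijection onto the
`(2g-n)`-subsets, and `∏_S ξ_S = σ^{C(2g-1,n-1)}` because each index lies in `C(2g-1,n-1)` of
the `n`-subsets.
-/

open Finset

theorem one_add_mul_inv_eq_of_mul_eq {K : Type*} [Field K] {a b s t : K} (hab : a * b = s)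
    (hs : s ≠ 0) (ht : t ≠ 0) :
    1 + a * (s * t)⁻¹ = a * (s * t)⁻¹ * (1 + b * t) := by
  obtain ⟨ha, hb⟩ := mul_ne_zero_iff.mp (hab ▸ hs)
  subst hab
  field_simp
  ring

section

variable {α : Type*} [Fintype α] [DecidableEq α]

theorem Finset.card_filter_mem_powersetCard_univ {n : ℕ} (hn : 1 ≤ n) (i : α) :
    #{S ∈ powersetCard n (univ : Finset α) | i ∈ S} = (Fintype.card α - 1).choose (n - 1) := by
  simpa using card_filter_powersetCard_subset {i} univ n (subset_univ _) (by simpa using hn)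

theorem Finset.prod_powersetCard_prod {M : Type*} [CommMonoid M] {n : ℕ} (hn : 1 ≤ n)
    (f : α → M) :
    ∏ S ∈ powersetCard n (univ : Finset α), ∏ i ∈ S, f i
      = (∏ i, f i) ^ (Fintype.card α - 1).choose (n - 1) := by
  calc ∏ S ∈ powersetCard n (univ : Finset α), ∏ i ∈ S, f i
      = ∏ S ∈ powersetCard n (univ : Finset α), ∏ i, if i ∈ S then f i else 1 := by
        refine prod_congr rfl fun S _ ↦ ?_
        rw [prod_ite_mem, univ_inter]
    _ = ∏ i, ∏ S ∈ powersetCard n (univ : Finset α), if i ∈ S then f i else 1 := prod_comm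
    _ = (∏ i, f i) ^ (Fintype.card α - 1).choose (n - 1) := by
        simp only [prod_ite, prod_const, one_pow, mul_one,
          card_filter_mem_powersetCard_univ hn, prod_pow]

theorem Finset.prod_powersetCard_compl {M : Type*} [CommMonoid M] {n : ℕ}
    (hn : n ≤ Fintype.card α) (f : Finset α → M) :
    ∏ S ∈ powersetCard n (univ : Finset α), f Sᶜ
      = ∏ S ∈ powersetCard (Fintype.card α - n) (univ : Finset α), f S := by
  refine prod_nbij' compl compl (fun S hS ↦ ?_) (fun S hS ↦ ?_) (fun S _ ↦ compl_compl S)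
    (fun S _ ↦ compl_compl S) fun S _ ↦ rfl
  all_goals
    simp only [mem_powersetCard_univ, card_compl] at hS ⊢
    omega

theorem prod_powersetCard_one_add_prod_mul_inv {K : Type*} [Field K] (ξ : α → K)
    (hξ : ∀ i, ξ i ≠ 0) {n : ℕ} (hn1 : 1 ≤ n) (hn2 : n ≤ Fintype.card α) {t : K}
    (ht : t ≠ 0) :
    ∏ S ∈ powersetCard n (univ : Finset α), (1 + (∏ i ∈ S, ξ i) * ((∏ i, ξ i) * t)⁻¹)
      = ((∏ i, ξ i) * t)⁻¹ ^ (Fintype.card α).choose n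
          * (∏ i, ξ i) ^ (Fintype.card α - 1).choose (n - 1)
          * ∏ S ∈ powersetCard (Fintype.card α - n) (univ : Finset α),
              (1 + (∏ i ∈ S, ξ i) * t) := by
  have hσ : ∏ i, ξ i ≠ 0 := prod_ne_zero_iff.mpr fun i _ ↦ hξ i
  have split (S : Finset α) :
      1 + (∏ i ∈ S, ξ i) * ((∏ i, ξ i) * t)⁻¹
        = (∏ i ∈ S, ξ i) * ((∏ i, ξ i) * t)⁻¹ * (1 + (∏ i ∈ Sᶜ, ξ i) * t) :=
    one_add_mul_inv_eq_of_mul_eq (prod_mul_prod_compl S ξ) hσ ht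
  simp_rw [split, prod_mul_distrib, prod_const, card_powersetCard, card_univ,
    prod_powersetCard_prod hn1, prod_powersetCard_compl hn2 fun S ↦ 1 + (∏ i ∈ S, ξ i) * t]
  ring

end

theorem qgn_functional_equation_general (g n : ℕ) (hn1 : 1 ≤ n) (hn2 : n ≤ 2 * g - 1)
    (K : Type*) [Field K] [Algebra (MvPolynomial (Fin (2 * g)) ℤ) K]
    [IsFractionRing (MvPolynomial (Fin (2 * g)) ℤ) K]
    (ξ : Fin (2 * g) → K)
    (hξ : ∀ i, ξ i = algebraMap (MvPolynomial (Fin (2 * g)) ℤ) K (MvPolynomial.X i))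
    (σ : K) (hσ : σ = ∏ i, ξ i)
    (t : K) (ht : t ≠ 0) :
    ∏ S ∈ powersetCard n (univ : Finset (Fin (2 * g))),
        (1 + (∏ i ∈ S, ξ i) * (σ * t)⁻¹)
      = ((σ * t)⁻¹) ^ (Nat.choose (2 * g) n) * σ ^ (Nat.choose (2 * g - 1) (n - 1)) *
          ∏ S ∈ powersetCard (2 * g - n) (univ : Finset (Fin (2 * g))),
            (1 + (∏ i ∈ S, ξ i) * t) := by
  have hξ0 (i : Fin (2 * g)) : ξ i ≠ 0 := by
    rw [hξ i, map_ne_zero_iff _ (IsFractionRing.injective _ K)]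
    exact MvPolynomial.X_ne_zero i
  subst hσ
  simpa using prod_powersetCard_one_add_prod_mul_inv ξ hξ0 hn1
    (by rw [Fintype.card_fin]; omega) ht

/-- With `σ_1,…,σ_{2g}` the elementary symmetric polynomials in `ξ_1,…,ξ_{2g}`,
`σ = σ_{2g} = ξ_1⋯ξ_{2g}`, and `q^g_n(t) = ∏_{i_1<…<i_n} (1 + ξ_{i_1}⋯ξ_{i_n} t)`
of degree `b^g_n = C(2g,n)`, one has, in the fraction field of `ℤ[ξ_1,…,ξ_{2g}]`
(with `t` invertible, i.e. in the Laurent localization),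
`q^g_n(1/(σ t)) = (σ t)^{-b^g_n} σ^{b^g_n n/(2g)} q^g_{2g-n}(t)`,
where `b^g_n · n / (2g) = C(2g-1, n-1)`. -/
theorem qgn_functional_equation (g n : ℕ) (hg : 1 ≤ g) (hn1 : 1 ≤ n) (hn2 : n ≤ 2 * g - 1)
    (K : Type*) [Field K] [Algebra (MvPolynomial (Fin (2 * g)) ℤ) K]
    [IsFractionRing (MvPolynomial (Fin (2 * g)) ℤ) K]
    (ξ : Fin (2 * g) → K)
    (hξ : ∀ i, ξ i = algebraMap (MvPolynomial (Fin (2 * g)) ℤ) K (MvPolynomial.X i))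
    (σ : K) (hσ : σ = ∏ i, ξ i)
    (t : K) (ht : t ≠ 0) :
    ∏ S ∈ powersetCard n (univ : Finset (Fin (2 * g))),
        (1 + (∏ i ∈ S, ξ i) * (σ * t)⁻¹)
      = ((σ * t)⁻¹) ^ (Nat.choose (2 * g) n) * σ ^ (Nat.choose (2 * g - 1) (n - 1)) *
          ∏ S ∈ powersetCard (2 * g - n) (univ : Finset (Fin (2 * g))),
            (1 + (∏ i ∈ S, ξ i) * t) :=
  qgn_functional_equation_general g n hn1 hn2 K ξ hξ σ hσ t ht
end

section
/- For representations V of S_m and W of S_n, with S_m ⋉ S_n^m ≤ S_{mn} acting on {1,...,mn} via m blocks of size n: Sign(S_{mn}) ⊗ Ind^{S_{mn}}_{S_m⋉S_n^m}(V ⊗ W^{⊗m}) is isomorphic to Ind^{S_{mn}}_{S_m⋉S_n^m}(V' ⊗ (W')^{⊗m}) if n is odd, and to Ind^{S_{mn}}_{S_m⋉S_n^m}(V ⊗ (W')^{⊗m}) if n is even, where V' = Sign(S_m) ⊗ V and W' = Sign(S_n) ⊗ W. -/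
open TensorProduct

section Defs

variable {k G H V W : Type*} [CommRing k] [Group G] [Group H]
  [AddCommGroup V] [Module k V] [AddCommGroup W] [Module k W]

/-- The underlying space of the representation of `G` induced along `φ : H →* G`:
functions `f : G → V` with `f (φ h * g) = ρ h (f g)`. -/
def indCarrier (φ : H →* G) (ρ : Representation k H V) : Submodule k (G → V) where
  carrier := {f | ∀ (h : H) (g : G), f (φ h * g) = ρ h (f g)}
  add_mem' := by intro a b ha hb h g; simp [ha h g, hb h g]
  zero_mem' := by intro h g; simp
  smul_mem' := by intro c a ha h g; simp [ha h g]

/-- The underlying space of the induced representation (type synonym). -/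
def IndSpace (φ : H →* G) (ρ : Representation k H V) : Type _ := indCarrier φ ρ

noncomputable instance (φ : H →* G) (ρ : Representation k H V) :
    AddCommGroup (IndSpace φ ρ) :=
  inferInstanceAs (AddCommGroup (indCarrier φ ρ))

noncomputable instance (φ : H →* G) (ρ : Representation k H V) :
    Module k (IndSpace φ ρ) :=
  inferInstanceAs (Module k (indCarrier φ ρ))

/-- The induced representation `Ind_H^G V`, with `G` acting by right translation. -/
def indRep (φ : H →* G) (ρ : Representation k H V) : Representation k G (IndSpace φ ρ) where
  toFun g :=
    { toFun := fun f => (⟨fun x => ((show indCarrier φ ρ from f) : G → V) (x * g), by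
        intro h x
        simpa [mul_assoc] using (show indCarrier φ ρ from f).2 h (x * g)⟩ : indCarrier φ ρ)
      map_add' := by intro a b; rfl
      map_smul' := by intro c a; rfl }
  map_one' := by apply LinearMap.ext; intro f; apply Subtype.ext; funext x; simp <;> rfl
  map_mul' g₁ g₂ := by
    apply LinearMap.ext; intro f; apply Subtype.ext; funext x
    simp [mul_assoc] <;>
      exact congrArg (fun y => ((show indCarrier φ ρ from f) : G → V) y) (mul_assoc x g₁ g₂).symm

/-- An equivariant isomorphism of representations. -/
def RepIso (ρ : Representation k G V) (τ : Representation k G W) : Prop :=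
  ∃ e : V ≃ₗ[k] W, ∀ (g : G) (v : V), e (ρ g v) = τ g (e v)

end Defs

/-- Twisting a representation of a symmetric group by the sign character. -/
def signTwist {k α V : Type*} [CommRing k] [Fintype α] [DecidableEq α] [AddCommGroup V]
    [Module k V] (ρ : Representation k (Equiv.Perm α) V) :
    Representation k (Equiv.Perm α) V where
  toFun g := ((Equiv.Perm.sign g : ℤ) : k) • ρ g
  map_one' := by simp
  map_mul' g h := by
    ext v
    simp only [Equiv.Perm.sign_mul, Module.End.mul_apply, LinearMap.smul_apply, map_smul,
      map_mul, smul_smul]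
    congr 1
    push_cast
    ring

/-- The action of `S_m` on `S_n^m` permuting the coordinates. -/
def permAut (m n : ℕ) : Equiv.Perm (Fin m) →* MulAut (Fin m → Equiv.Perm (Fin n)) where
  toFun σ :=
    { toFun := fun f => f ∘ σ.symm
      invFun := fun f => f ∘ σ
      left_inv := fun f => by ext i j; simp
      right_inv := fun f => by ext i j; simp
      map_mul' := fun f g => rfl }
  map_one' := by ext f i j <;> simp [Equiv.Perm.one_symm]
  map_mul' σ τ := by ext f i j <;> simp [← Equiv.Perm.inv_def, mul_inv_rev]

/-- The wreath product `S_n ≀ S_m = S_m ⋉ S_n^m` mapped into the permutations of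
`{1,…,mn} = Fin m × Fin n` (blocks of size `n` indexed by `Fin m`):
`(f, σ)` sends `(i, j)` to `(σ i, f (σ i) j)`. -/
def wreathHom (m n : ℕ) :
    (Fin m → Equiv.Perm (Fin n)) ⋊[permAut m n] Equiv.Perm (Fin m) →*
      Equiv.Perm (Fin m × Fin n) where
  toFun x := (Equiv.prodCongr x.right (Equiv.refl (Fin n))).trans
      (Equiv.prodShear (Equiv.refl (Fin m)) x.left)
  map_one' := by ext ⟨i, j⟩ <;> simp
  map_mul' a b := by
    ext ⟨i, j⟩ <;>
      simp [SemidirectProduct.mul_def, SemidirectProduct.mul_left, SemidirectProduct.mul_right, permAut,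
        Equiv.Perm.mul_apply] <;>
      first
        | rfl
        | (show (((a.left * (permAut m n a.right) b.left) ((a.right * b.right) i)) j : ℕ) = _
           simp [permAut, Equiv.Perm.mul_apply])

/-!
Multiplying functions `G → V` pointwise by the sign character `ε` identifies
`ε ⊗ Ind_H^G ρ` with `Ind_H^G ((ε ∘ φ) ⊗ ρ)`, because `ε` is multiplicative and `ε² = 1`.
It remains to restrict `ε` to the wreath product: the element `(f, σ)` is the block permutation
`σ × id` (which consists of `n` copies of `σ`) followed by the `f i` acting inside the blocks, so
its sign is `sign σ ^ n * ∏ i, sign (f i)`, and `sign σ ^ n` is `sign σ` or `1` according to the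
parity of `n`.
-/

section SignTwist

variable {k α H V : Type*} [CommRing k] [Fintype α] [DecidableEq α] [Group H]
  [AddCommGroup V] [Module k V]

theorem Equiv.Perm.sign_cast_mul_self (g : Equiv.Perm α) :
    ((Equiv.Perm.sign g : ℤ) : k) * ((Equiv.Perm.sign g : ℤ) : k) = 1 := by
  rw [← Int.cast_mul, ← Units.val_mul, Int.units_mul_self, Units.val_one, Int.cast_one]

variable {φ : H →* Equiv.Perm α} {ρ ρ' : Representation k H V}

theorem sign_smul_mem_indCarrier (hρ : ∀ x, ρ' x = ((Equiv.Perm.sign (φ x) : ℤ) : k) • ρ x)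
    {F : Equiv.Perm α → V} (hF : F ∈ indCarrier φ ρ) :
    (fun g => ((Equiv.Perm.sign g : ℤ) : k) • F g) ∈ indCarrier φ ρ' := by
  intro h g
  dsimp only
  rw [hF h g, hρ, map_mul, Units.val_mul, Int.cast_mul, LinearMap.smul_apply, map_smul,
    smul_smul]

theorem eq_sign_smul_symm (hρ : ∀ x, ρ' x = ((Equiv.Perm.sign (φ x) : ℤ) : k) • ρ x) (x : H) :
    ρ x = ((Equiv.Perm.sign (φ x) : ℤ) : k) • ρ' x := by
  rw [hρ, smul_smul, Equiv.Perm.sign_cast_mul_self, one_smul]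

def indSignMulEquiv (hρ : ∀ x, ρ' x = ((Equiv.Perm.sign (φ x) : ℤ) : k) • ρ x) :
    indCarrier φ ρ ≃ₗ[k] indCarrier φ ρ' where
  toFun F := ⟨_, sign_smul_mem_indCarrier hρ F.2⟩
  invFun F := ⟨_, sign_smul_mem_indCarrier (eq_sign_smul_symm hρ) F.2⟩
  map_add' F F' := Subtype.ext <| funext fun _ => smul_add _ _ _
  map_smul' c F := Subtype.ext <| funext fun _ => smul_comm _ c _
  left_inv F := Subtype.ext <| funext fun _ => by
    simp only [smul_smul, Equiv.Perm.sign_cast_mul_self, one_smul]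
  right_inv F := Subtype.ext <| funext fun _ => by
    simp only [smul_smul, Equiv.Perm.sign_cast_mul_self, one_smul]

theorem repIso_signTwist_indRep (hρ : ∀ x, ρ' x = ((Equiv.Perm.sign (φ x) : ℤ) : k) • ρ x) :
    RepIso (signTwist (indRep φ ρ)) (indRep φ ρ') := by
  refine ⟨indSignMulEquiv hρ, fun g (F : indCarrier φ ρ) => Subtype.ext <| funext fun x => ?_⟩
  show ((Equiv.Perm.sign x : ℤ) : k) • ((Equiv.Perm.sign g : ℤ) : k) • F.1 (x * g)
    = ((Equiv.Perm.sign (x * g) : ℤ) : k) • F.1 (x * g)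
  rw [smul_smul, map_mul, Units.val_mul, Int.cast_mul]

end SignTwist

theorem LinearMap.ext_tmul_tprod {R ι M P : Type*} {N : ι → Type*} [CommSemiring R] [Fintype ι]
    [AddCommMonoid M] [Module R M] [∀ i, AddCommMonoid (N i)] [∀ i, Module R (N i)]
    [AddCommMonoid P] [Module R P] {f g : M ⊗[R] (⨂[R] i, N i) →ₗ[R] P}
    (h : ∀ v w, f (v ⊗ₜ PiTensorProduct.tprod R w) = g (v ⊗ₜ PiTensorProduct.tprod R w)) :
    f = g :=
  TensorProduct.ext <| LinearMap.ext fun v => PiTensorProduct.ext <| MultilinearMap.ext (h v)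

section Wreath

variable {m n : ℕ}

theorem wreathHom_mk (f : Fin m → Equiv.Perm (Fin n)) (σ : Equiv.Perm (Fin m)) :
    wreathHom m n ⟨f, σ⟩ =
      Equiv.prodCongrRight f * Equiv.prodCongrLeft (fun _ : Fin n => σ) := by
  ext ⟨i, j⟩ <;> simp [wreathHom, Equiv.prodCongrRight, Equiv.prodCongrLeft, Equiv.Perm.mul_apply]

theorem sign_wreathHom_mk (f : Fin m → Equiv.Perm (Fin n)) (σ : Equiv.Perm (Fin m)) :
    Equiv.Perm.sign (wreathHom m n ⟨f, σ⟩) =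
      Equiv.Perm.sign σ ^ n * ∏ i, Equiv.Perm.sign (f i) := by
  rw [wreathHom_mk, map_mul, Equiv.Perm.sign_prodCongrRight, Equiv.Perm.sign_prodCongrLeft,
    Finset.prod_const, Finset.card_univ, Fintype.card_fin, mul_comm]

theorem sign_wreathHom_mk_of_odd (hn : Odd n) (f : Fin m → Equiv.Perm (Fin n))
    (σ : Equiv.Perm (Fin m)) :
    Equiv.Perm.sign (wreathHom m n ⟨f, σ⟩) = Equiv.Perm.sign σ * ∏ i, Equiv.Perm.sign (f i) := by
  rw [sign_wreathHom_mk, Int.units_pow_eq_pow_mod_two, Nat.odd_iff.mp hn, pow_one]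

theorem sign_wreathHom_mk_of_even (hn : Even n) (f : Fin m → Equiv.Perm (Fin n))
    (σ : Equiv.Perm (Fin m)) :
    Equiv.Perm.sign (wreathHom m n ⟨f, σ⟩) = ∏ i, Equiv.Perm.sign (f i) := by
  rw [sign_wreathHom_mk, Int.units_pow_eq_pow_mod_two, Nat.even_iff.mp hn, pow_zero, one_mul]

end Wreath

theorem sign_twist_of_induced_from_wreath_product_general
    (κ : Type*) [Field κ] (m n : ℕ)
    (V W : Type*) [AddCommGroup V] [Module κ V] [AddCommGroup W] [Module κ W]
    (ρV : Representation κ (Equiv.Perm (Fin m)) V)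
    (ρW : Representation κ (Equiv.Perm (Fin n)) W)
    (τ τ' τ'' : Representation κ ((Fin m → Equiv.Perm (Fin n)) ⋊[permAut m n] Equiv.Perm (Fin m))
      (V ⊗[κ] (⨂[κ] _i : Fin m, W)))
    (hτ : ∀ (f : Fin m → Equiv.Perm (Fin n)) (σ : Equiv.Perm (Fin m)) (v : V) (w : Fin m → W),
      τ ⟨f, σ⟩ (v ⊗ₜ[κ] PiTensorProduct.tprod κ w)
        = ρV σ v ⊗ₜ[κ] PiTensorProduct.tprod κ (fun i => ρW (f i) (w (σ.symm i))))
    (hτ' : ∀ (f : Fin m → Equiv.Perm (Fin n)) (σ : Equiv.Perm (Fin m)) (v : V) (w : Fin m → W),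
      τ' ⟨f, σ⟩ (v ⊗ₜ[κ] PiTensorProduct.tprod κ w)
        = (((Equiv.Perm.sign σ : ℤ) : κ) * ∏ i, ((Equiv.Perm.sign (f i) : ℤ) : κ)) •
            (ρV σ v ⊗ₜ[κ] PiTensorProduct.tprod κ (fun i => ρW (f i) (w (σ.symm i)))))
    (hτ'' : ∀ (f : Fin m → Equiv.Perm (Fin n)) (σ : Equiv.Perm (Fin m)) (v : V) (w : Fin m → W),
      τ'' ⟨f, σ⟩ (v ⊗ₜ[κ] PiTensorProduct.tprod κ w)
        = (∏ i, ((Equiv.Perm.sign (f i) : ℤ) : κ)) •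
            (ρV σ v ⊗ₜ[κ] PiTensorProduct.tprod κ (fun i => ρW (f i) (w (σ.symm i))))) :
    (Odd n → RepIso (signTwist (indRep (wreathHom m n) τ)) (indRep (wreathHom m n) τ')) ∧
    (Even n → RepIso (signTwist (indRep (wreathHom m n) τ)) (indRep (wreathHom m n) τ'')) := by
  refine ⟨fun hn => repIso_signTwist_indRep fun ⟨f, σ⟩ => ?_,
    fun hn => repIso_signTwist_indRep fun ⟨f, σ⟩ => ?_⟩
  · refine LinearMap.ext_tmul_tprod fun v w => ?_
    rw [hτ', LinearMap.smul_apply, hτ, sign_wreathHom_mk_of_odd hn, Units.val_mul, Int.cast_mul,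
      Units.coe_prod, Int.cast_prod]
  · refine LinearMap.ext_tmul_tprod fun v w => ?_
    rw [hτ'', LinearMap.smul_apply, hτ, sign_wreathHom_mk_of_even hn,
      Units.coe_prod, Int.cast_prod]

/-- For representations `V` of `S_m` and `W` of `S_n`, with the wreath product
`Γ = S_m ⋉ S_n^m ≤ S_{mn}` acting via `m` blocks of size `n` (`wreathHom`), and `τ` the
representation of `Γ` on `V ⊗ W^{⊗m}` (with `S_n^m` acting factorwise and `S_m` permuting the
factors and acting on `V`), the representation `Sign(S_{mn}) ⊗ Ind^{S_{mn}}_Γ (V ⊗ W^{⊗m})` is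
isomorphic to `Ind^{S_{mn}}_Γ (V' ⊗ (W')^{⊗m})` if `n` is odd, and to
`Ind^{S_{mn}}_Γ (V ⊗ (W')^{⊗m})` if `n` is even, where `V' = Sign(S_m) ⊗ V` and
`W' = Sign(S_n) ⊗ W`. -/
theorem sign_twist_of_induced_from_wreath_product
    (κ : Type*) [Field κ] [CharZero κ] (m n : ℕ)
    (V W : Type*) [AddCommGroup V] [Module κ V] [AddCommGroup W] [Module κ W]
    [FiniteDimensional κ V] [FiniteDimensional κ W]
    (ρV : Representation κ (Equiv.Perm (Fin m)) V)
    (ρW : Representation κ (Equiv.Perm (Fin n)) W)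
    (τ τ' τ'' : Representation κ ((Fin m → Equiv.Perm (Fin n)) ⋊[permAut m n] Equiv.Perm (Fin m))
      (V ⊗[κ] (⨂[κ] _i : Fin m, W)))
    (hτ : ∀ (f : Fin m → Equiv.Perm (Fin n)) (σ : Equiv.Perm (Fin m)) (v : V) (w : Fin m → W),
      τ ⟨f, σ⟩ (v ⊗ₜ[κ] PiTensorProduct.tprod κ w)
        = ρV σ v ⊗ₜ[κ] PiTensorProduct.tprod κ (fun i => ρW (f i) (w (σ.symm i))))
    (hτ' : ∀ (f : Fin m → Equiv.Perm (Fin n)) (σ : Equiv.Perm (Fin m)) (v : V) (w : Fin m → W),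
      τ' ⟨f, σ⟩ (v ⊗ₜ[κ] PiTensorProduct.tprod κ w)
        = (((Equiv.Perm.sign σ : ℤ) : κ) * ∏ i, ((Equiv.Perm.sign (f i) : ℤ) : κ)) •
            (ρV σ v ⊗ₜ[κ] PiTensorProduct.tprod κ (fun i => ρW (f i) (w (σ.symm i)))))
    (hτ'' : ∀ (f : Fin m → Equiv.Perm (Fin n)) (σ : Equiv.Perm (Fin m)) (v : V) (w : Fin m → W),
      τ'' ⟨f, σ⟩ (v ⊗ₜ[κ] PiTensorProduct.tprod κ w)
        = (∏ i, ((Equiv.Perm.sign (f i) : ℤ) : κ)) •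
            (ρV σ v ⊗ₜ[κ] PiTensorProduct.tprod κ (fun i => ρW (f i) (w (σ.symm i))))) :
    (Odd n → RepIso (signTwist (indRep (wreathHom m n) τ)) (indRep (wreathHom m n) τ')) ∧
    (Even n → RepIso (signTwist (indRep (wreathHom m n) τ)) (indRep (wreathHom m n) τ'')) :=
  sign_twist_of_induced_from_wreath_product_general κ m n V W ρV ρW τ τ' τ'' hτ hτ' hτ''
end

section
/- Let A be a special λ-ring with operations λ^r, and let σ^r be the opposite operations. Then for all x, y ∈ A and n ≥ 0: λ^n(xy) = P_n(σ^1(x),...,σ^n(x), σ^1(y),...,σ^n(y)), where P_n is the universal polynomial defined as the coefficient of t^n in ∏_{1≤i,j≤N}(1+ξ_i x_j t) expressed in the elementary symmetric polynomials of the ξ's and of the x's (N ≥ n). -/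
/-! Since `λ_t` turns sums into products, `λ_t(0) = 1` and `λ_t(-a) = λ_t(a)⁻¹`, so the
relation `σ_t(a) λ_{-t}(a) = 1` gives `σ^k(a) = (-1)^k λ^k(-a)`. Hence
`λ^n(xy) = λ^n((-x)(-y)) = P_n(λ^i(-x), λ^j(-y)) = P_n((-1)^i σ^i(x), (-1)^j σ^j(y))`,
and it remains to see that `P_n` is unchanged by these signs. Negating all `ξ_i, x_j` leaves
`∏ (1 + ξ_i x_j t)` unchanged and multiplies `e_k` by `(-1)^k`; as the elementary symmetric
polynomials of the `ξ`'s together with those of the `x`'s are algebraically independent (for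
`N = n`), this sign invariance passes to `P_n` itself. -/

open Finset MvPolynomial

section LambdaSeries

variable {A : Type*} [CommRing A] {lam : ℕ → A → A}

theorem mk_lam_add
    (hladd : ∀ (r : ℕ) (a b : A),
      lam r (a + b) = ∑ p ∈ Finset.HasAntidiagonal.antidiagonal r, lam p.1 a * lam p.2 b)
    (a b : A) :
    PowerSeries.mk (lam · (a + b)) = PowerSeries.mk (lam · a) * PowerSeries.mk (lam · b) := by
  ext r
  simp only [PowerSeries.coeff_mk, PowerSeries.coeff_mul, hladd]

theorem mk_lam_mul_mk_lam_neg (hl0 : ∀ a : A, lam 0 a = 1)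
    (hladd : ∀ (r : ℕ) (a b : A),
      lam r (a + b) = ∑ p ∈ Finset.HasAntidiagonal.antidiagonal r, lam p.1 a * lam p.2 b)
    (a : A) :
    PowerSeries.mk (lam · a) * PowerSeries.mk (lam · (-a)) = 1 := by
  have hunit : IsUnit (PowerSeries.mk (lam · (0 : A))) := by
    simp [PowerSeries.isUnit_iff_constantCoeff, hl0]
  have hzero : PowerSeries.mk (lam · (0 : A)) = 1 := by
    refine hunit.mul_left_cancel ?_
    rw [← mk_lam_add hladd, add_zero, mul_one]
  rw [← mk_lam_add hladd, add_neg_cancel, hzero]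

theorem sig_eq_neg_one_pow_mul_lam_neg {sig : ℕ → A → A}
    (hneg : ∀ a : A, PowerSeries.mk (lam · a) * PowerSeries.mk (lam · (-a)) = 1)
    (hsig : ∀ a : A,
      (PowerSeries.mk fun r => sig r a) * (PowerSeries.mk fun r => (-1 : A) ^ r * lam r a) = 1)
    (k : ℕ) (x : A) :
    sig k x = (-1) ^ k * lam k (-x) := by
  have hrescale : (PowerSeries.mk fun r => (-1 : A) ^ r * lam r x)
      = PowerSeries.rescale (-1) (PowerSeries.mk (lam · x)) := by
    ext r
    simp [PowerSeries.coeff_rescale]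
  have hinv :
      PowerSeries.mk (sig · x) = PowerSeries.rescale (-1) (PowerSeries.mk (lam · (-x))) := by
    refine left_inv_eq_right_inv (hrescale ▸ hsig x) ?_
    rw [← map_mul, hneg, map_one]
  simpa [PowerSeries.coeff_rescale] using congrArg (PowerSeries.coeff k) hinv

end LambdaSeries

section Esymm

variable {σ τ R : Type*} [Fintype σ] [Fintype τ] [CommRing R]

theorem aeval_neg_esymm {S : Type*} [CommRing S] [Algebra R S] (v : σ → S) (k : ℕ) :
    aeval (fun s => -v s) (esymm σ R k) = (-1) ^ k * aeval v (esymm σ R k) := by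
  simp only [esymm, map_sum, map_prod, aeval_X, Finset.mul_sum]
  refine Finset.sum_congr rfl fun t ht => ?_
  rw [prod_neg, mem_powersetCard_univ.mp ht]

theorem algebraicIndependent_esymm {n : ℕ} (hn : n ≤ Fintype.card σ) :
    AlgebraicIndependent R fun i : Fin n => esymm σ R (i + 1) := by
  rw [algebraicIndependent_iff_injective_aeval]
  convert Subtype.val_injective.comp (esymmAlgHom_injective (σ := σ) R hn) using 1
  funext p
  exact (esymmAlgHom_apply p).symm

variable (σ τ R) in
noncomputable def esymmPair (m n : ℕ) : Fin m ⊕ Fin n → MvPolynomial (σ ⊕ τ) R :=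
  Sum.elim (fun i => rename Sum.inl (esymm σ R (i + 1)))
    (fun j => rename Sum.inr (esymm τ R (j + 1)))

theorem algebraicIndependent_esymmPair {m n : ℕ} (hm : m ≤ Fintype.card σ)
    (hn : n ≤ Fintype.card τ) :
    AlgebraicIndependent R (esymmPair σ τ R m n) := by
  have h := ((algebraicIndependent_esymm hn).sumElim_comp
    (algebraicIndependent_esymm (R := MvPolynomial τ R) hm)).map'
    (f := (sumAlgEquiv R σ τ).symm.toAlgHom) (sumAlgEquiv R σ τ).symm.injective
  convert h using 1
  funext s
  rcases s with i | j
  all_goals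
    simp only [esymmPair, Sum.elim_inl, Sum.elim_inr, Function.comp_apply,
      AlgEquiv.coe_toAlgHom]
    rw [AlgEquiv.eq_symm_apply]
  · exact (AlgHom.congr_fun (sumAlgEquiv_comp_rename_inl R σ τ) _).trans (map_esymm _ _ _ _)
  · exact AlgHom.congr_fun (sumAlgEquiv_comp_rename_inr R σ τ) _

theorem aeval_neg_X_coeff_prod_C_X_mul_X_add_one (r : ℕ) :
    aeval (fun s => -X s) ((∏ i : σ, ∏ j : τ,
      (Polynomial.C (X (Sum.inl i) * X (Sum.inr j) : MvPolynomial (σ ⊕ τ) R) *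
        Polynomial.X + 1)).coeff r)
    = (∏ i : σ, ∏ j : τ,
      (Polynomial.C (X (Sum.inl i) * X (Sum.inr j) : MvPolynomial (σ ⊕ τ) R) *
        Polynomial.X + 1)).coeff r := by
  rw [← AlgHom.coe_toRingHom, ← Polynomial.coeff_map]
  simp only [Polynomial.map_prod, Polynomial.map_add, Polynomial.map_mul, Polynomial.map_C,
    Polynomial.map_X, Polynomial.map_one, AlgHom.coe_toRingHom]
  simp only [map_mul (aeval _), aeval_X, neg_mul_neg]

theorem aeval_sumElim_neg_one_pow_mul_X_eq_self {m n : ℕ} (hm : m ≤ Fintype.card σ)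
    (hn : n ≤ Fintype.card τ) {p : MvPolynomial (Fin m ⊕ Fin n) R}
    (hp : aeval (fun s => -X s) (aeval (esymmPair σ τ R m n) p)
      = aeval (esymmPair σ τ R m n) p) :
    aeval (Sum.elim (fun i : Fin m => (-1) ^ (i + 1 : ℕ) * X (Sum.inl i))
      (fun j : Fin n => (-1) ^ (j + 1 : ℕ) * X (Sum.inr j))) p = p := by
  refine algebraicIndependent_esymmPair hm hn ?_
  rw [← AlgHom.comp_apply, comp_aeval, ← hp, ← AlgHom.comp_apply, comp_aeval]
  refine congrArg (aeval · p) (funext fun s => ?_)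
  rcases s with i | j
  all_goals
    simp only [esymmPair, Sum.elim_inl, Sum.elim_inr, map_mul, map_pow, map_neg, map_one,
      aeval_X, aeval_rename, Function.comp_def]
    rw [aeval_neg_esymm, rename_eq_aeval]
    rfl

theorem aeval_sumElim_neg_one_pow_mul {m n : ℕ} (hm : m ≤ Fintype.card σ)
    (hn : n ≤ Fintype.card τ) {p : MvPolynomial (Fin m ⊕ Fin n) R}
    (hp : aeval (fun s => -X s) (aeval (esymmPair σ τ R m n) p)
      = aeval (esymmPair σ τ R m n) p)
    {A : Type*} [CommRing A] [Algebra R A] (a : Fin m → A) (b : Fin n → A) :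
    aeval (Sum.elim (fun i : Fin m => (-1) ^ (i + 1 : ℕ) * a i)
      (fun j : Fin n => (-1) ^ (j + 1 : ℕ) * b j)) p = aeval (Sum.elim a b) p := by
  conv_rhs => rw [← aeval_sumElim_neg_one_pow_mul_X_eq_self hm hn hp]
  rw [← AlgHom.comp_apply, comp_aeval]
  refine congrArg (aeval · p) (funext fun s => ?_)
  rcases s with i | j <;> simp

end Esymm

theorem special_lambda_of_product_in_terms_of_sigma_general
    (A : Type*) [CommRing A] (lam sig : ℕ → A → A)
    (hl0 : ∀ a : A, lam 0 a = 1)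
    (hladd : ∀ (r : ℕ) (a b : A),
      lam r (a + b) = ∑ p ∈ Finset.HasAntidiagonal.antidiagonal r, lam p.1 a * lam p.2 b)
    (hsig : ∀ a : A,
      (PowerSeries.mk fun r => sig r a) * (PowerSeries.mk fun r => (-1 : A) ^ r * lam r a) = 1)
    (P : (r : ℕ) → MvPolynomial (Fin r ⊕ Fin r) ℤ)
    (hP : ∀ (r N : ℕ), r ≤ N →
      aeval (Sum.elim
          (fun i : Fin r => rename Sum.inl (esymm (Fin N) ℤ (i + 1)))
          (fun j : Fin r => rename Sum.inr (esymm (Fin N) ℤ (j + 1)))) (P r)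
        = (∏ i : Fin N, ∏ j : Fin N,
            (Polynomial.C ((X (Sum.inl i) * X (Sum.inr j) : MvPolynomial (Fin N ⊕ Fin N) ℤ)) *
              Polynomial.X + 1)).coeff r)
    (hspecial_mul : ∀ (x y : A) (r : ℕ),
      lam r (x * y) = eval₂ (Int.castRingHom A)
        (Sum.elim (fun i : Fin r => lam (i + 1) x) (fun j : Fin r => lam (j + 1) y)) (P r)) :
    ∀ (x y : A) (n : ℕ),
      lam n (x * y) = eval₂ (Int.castRingHom A)
        (Sum.elim (fun i : Fin n => sig (i + 1) x) (fun j : Fin n => sig (j + 1) y)) (P n) := by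
  intro x y n
  have hsign : aeval (fun s => -X s) (aeval (esymmPair (Fin n) (Fin n) ℤ n n) (P n))
      = aeval (esymmPair (Fin n) (Fin n) ℤ n n) (P n) :=
    (hP n n le_rfl).symm ▸ aeval_neg_X_coeff_prod_C_X_mul_X_add_one n
  have hsig' := sig_eq_neg_one_pow_mul_lam_neg (mk_lam_mul_mk_lam_neg hl0 hladd) hsig
  calc lam n (x * y) = lam n (-x * -y) := by rw [neg_mul_neg]
    _ = aeval (Sum.elim (fun i : Fin n => lam (i + 1) (-x))
          (fun j : Fin n => lam (j + 1) (-y))) (P n) := by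
      rw [hspecial_mul, aeval_def, algebraMap_int_eq]
    _ = aeval (Sum.elim (fun i : Fin n => (-1) ^ (i + 1 : ℕ) * lam (i + 1) (-x))
          (fun j : Fin n => (-1) ^ (j + 1 : ℕ) * lam (j + 1) (-y))) (P n) :=
      (aeval_sumElim_neg_one_pow_mul (Fintype.card_fin n).ge (Fintype.card_fin n).ge hsign _ _).symm
    _ = _ := by simp only [← hsig', aeval_def, algebraMap_int_eq]

/-- In a special λ-ring `A` with opposite operations `σ^r`, one has
`λ^n(xy) = P_n(σ¹(x),…,σⁿ(x), σ¹(y),…,σⁿ(y))`, where `P_n` is the universal polynomial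
given by the coefficient of `tⁿ` in `∏_{i,j≤N} (1 + ξ_i x_j t)` written in the elementary
symmetric polynomials of the `ξ`'s and of the `x`'s (`N ≥ n`).

The λ-ring structure `lam`, its opposite `sig` (characterized by `σ_t(a)·λ_{−t}(a) = 1`),
and the universal polynomials `P r` (for specialness of multiplication) and `Pc m r`
(for specialness of composition), with their defining properties, are hypothesized. -/
theorem special_lambda_of_product_in_terms_of_sigma
    (A : Type*) [CommRing A] (lam sig : ℕ → A → A)
    (hl0 : ∀ a : A, lam 0 a = 1) (hl1 : ∀ a : A, lam 1 a = a)
    (hladd : ∀ (r : ℕ) (a b : A),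
      lam r (a + b) = ∑ p ∈ Finset.HasAntidiagonal.antidiagonal r, lam p.1 a * lam p.2 b)
    (hsig : ∀ a : A,
      (PowerSeries.mk fun r => sig r a) * (PowerSeries.mk fun r => (-1 : A) ^ r * lam r a) = 1)
    (P : (r : ℕ) → MvPolynomial (Fin r ⊕ Fin r) ℤ)
    (hP : ∀ (r N : ℕ), r ≤ N →
      aeval (Sum.elim
          (fun i : Fin r => rename Sum.inl (esymm (Fin N) ℤ (i + 1)))
          (fun j : Fin r => rename Sum.inr (esymm (Fin N) ℤ (j + 1)))) (P r)
        = (∏ i : Fin N, ∏ j : Fin N,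
            (Polynomial.C ((X (Sum.inl i) * X (Sum.inr j) : MvPolynomial (Fin N ⊕ Fin N) ℤ)) *
              Polynomial.X + 1)).coeff r)
    (Pc : (m r : ℕ) → MvPolynomial (Fin (m * r)) ℤ)
    (hPc : ∀ (m r N : ℕ), m * r ≤ N →
      aeval (fun i : Fin (m * r) => esymm (Fin N) ℤ (i + 1)) (Pc m r)
        = (∏ S ∈ powersetCard r (univ : Finset (Fin N)),
            (Polynomial.C ((∏ i ∈ S, X i : MvPolynomial (Fin N) ℤ)) *
              Polynomial.X + 1)).coeff m)
    (hspecial_mul : ∀ (x y : A) (r : ℕ),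
      lam r (x * y) = eval₂ (Int.castRingHom A)
        (Sum.elim (fun i : Fin r => lam (i + 1) x) (fun j : Fin r => lam (j + 1) y)) (P r))
    (hspecial_comp : ∀ (x : A) (m r : ℕ),
      lam m (lam r x) = eval₂ (Int.castRingHom A)
        (fun i : Fin (m * r) => lam (i + 1) x) (Pc m r)) :
    ∀ (x y : A) (n : ℕ),
      lam n (x * y) = eval₂ (Int.castRingHom A)
        (Sum.elim (fun i : Fin n => sig (i + 1) x) (fun j : Fin n => sig (j + 1) y)) (P n) :=
  special_lambda_of_product_in_terms_of_sigma_general A lam sig hl0 hladd hsig P hP hspecial_mul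
end

section
/- Let A be a special λ-ring with opposite operations σ^r. Then for all x ∈ A, m ≥ 0, and n ≥ 1: if n is odd then σ^m(σ^n(x)) = P_{m,n}(σ^1(x),...,σ^{mn}(x)), and if n is even then λ^m(σ^n(x)) = P_{m,n}(σ^1(x),...,σ^{mn}(x)), where P_{m,n} is the universal polynomial equal to the coefficient of t^m in ∏_{1≤i_1<...<i_n≤N}(1+ξ_{i_1}⋯ξ_{i_n}t) written in elementary symmetric polynomials (N ≥ mn). -/
/-!
Writing `λ_t(a) = ∑ λ^r(a) tʳ`, additivity makes `λ_t(-a)` the inverse of `λ_t(a)`, so the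
defining relation `σ_t(a) λ_{-t}(a) = 1` gives `σ^r(a) = (-1)^r λ^r(-a)`. Hence
`P_{m,n}(σ¹x, …, σ^{mn}x) = P_{m,n}(-λ¹(-x), λ²(-x), …)`, and the substitution `ξᵢ ↦ -ξᵢ`,
which sends `eₖ` to `(-1)^k eₖ` and `ξ_{i_1}⋯ξ_{i_n}` to `(-1)^n ξ_{i_1}⋯ξ_{i_n}`, shows that
this is `(-1)^{mn} P_{m,n}(λ¹(-x), …) = (-1)^{mn} λ^m(λ^n(-x))`. Comparing with
`σ^n(x) = (-1)^n λ^n(-x)` gives both parities.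
-/

open Finset MvPolynomial

section SignChange

variable {σ R : Type*} [CommRing R]

lemma aeval_neg_X_prod_X (s : Finset σ) :
    aeval (fun j : σ => (-X j : MvPolynomial σ R)) (∏ i ∈ s, X i : MvPolynomial σ R)
      = (-1) ^ #s * ∏ i ∈ s, X i := by
  simp only [map_prod, aeval_X, prod_neg]

lemma aeval_neg_X_esymm [Fintype σ] (k : ℕ) :
    aeval (fun j : σ => (-X j : MvPolynomial σ R)) (esymm σ R k) = (-1) ^ k * esymm σ R k := by
  simp only [esymm, map_sum, mul_sum]
  refine sum_congr rfl fun s hs => ?_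
  rw [aeval_neg_X_prod_X, (mem_powersetCard.mp hs).2]

lemma Polynomial.coeff_prod_C_mul_mul_X_add_one {ι : Type*} (s : Finset ι) (c : R) (f : ι → R)
    (m : ℕ) :
    (∏ i ∈ s, (Polynomial.C (c * f i) * Polynomial.X + 1)).coeff m
      = c ^ m * (∏ i ∈ s, (Polynomial.C (f i) * Polynomial.X + 1)).coeff m := by
  rw [mul_comm, ← Polynomial.comp_C_mul_X_coeff, Polynomial.prod_comp]
  congr 1
  refine prod_congr rfl fun i _ => ?_
  simp only [Polynomial.add_comp, Polynomial.mul_comp, Polynomial.C_comp, Polynomial.X_comp,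
    Polynomial.one_comp, ← mul_assoc, ← Polynomial.C_mul, mul_comm c]

lemma aeval_neg_X_coeff_prod_powersetCard (s : Finset σ) (m n : ℕ) :
    aeval (fun j : σ => (-X j : MvPolynomial σ R)) ((∏ S ∈ powersetCard n s,
        (Polynomial.C (∏ i ∈ S, X i : MvPolynomial σ R) * Polynomial.X + 1)).coeff m)
      = (-1) ^ (m * n) * (∏ S ∈ powersetCard n s,
        (Polynomial.C (∏ i ∈ S, X i : MvPolynomial σ R) * Polynomial.X + 1)).coeff m := by
  rw [← AlgHom.coe_toRingHom, ← Polynomial.coeff_map, Polynomial.map_prod,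
    prod_congr rfl fun S hS => ?_, Polynomial.coeff_prod_C_mul_mul_X_add_one, ← pow_mul,
    mul_comm n]
  rw [Polynomial.map_add, Polynomial.map_mul, Polynomial.map_C, Polynomial.map_X,
    Polynomial.map_one, AlgHom.coe_toRingHom, aeval_neg_X_prod_X, (mem_powersetCard.mp hS).2]

lemma aeval_neg_one_pow_mul_eq_of_aeval_neg_X_aeval_esymm {d e : ℕ}
    (Q : MvPolynomial (Fin d) R)
    (hQ : aeval (fun j : Fin d => (-X j : MvPolynomial (Fin d) R))
        (aeval (fun i : Fin d => esymm (Fin d) R (i + 1)) Q)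
      = (-1) ^ e * aeval (fun i : Fin d => esymm (Fin d) R (i + 1)) Q)
    {A : Type*} [CommRing A] [Algebra R A] (b : Fin d → A) :
    aeval (fun i : Fin d => (-1 : A) ^ ((i : ℕ) + 1) * b i) Q = (-1) ^ e * aeval b Q := by
  have hsubst : aeval (fun i : Fin d => (-1 : MvPolynomial (Fin d) R) ^ ((i : ℕ) + 1) * X i) Q
      = (-1) ^ e * Q := by
    -- the `eᵢ` are algebraically independent, so it suffices to compare images under `Xᵢ ↦ eᵢ`
    refine esymmAlgHom_fin_injective R le_rfl (Subtype.ext ?_)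
    rw [esymmAlgHom_apply, esymmAlgHom_apply, map_mul, map_pow, map_neg, map_one, ← hQ,
      comp_aeval_apply, comp_aeval_apply]
    simp only [map_mul, map_pow, map_neg, map_one, aeval_X, aeval_neg_X_esymm]
  simpa only [comp_aeval_apply, map_mul, map_pow, map_neg, map_one, aeval_X]
    using congrArg (aeval b) hsubst

end SignChange

section LambdaSeries

variable {A : Type*} [CommRing A] {lam : ℕ → A → A}

lemma mk_lam_add_eq_mul
    (hladd : ∀ (r : ℕ) (a b : A),
      lam r (a + b) = ∑ p ∈ Finset.HasAntidiagonal.antidiagonal r, lam p.1 a * lam p.2 b)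
    (a b : A) :
    PowerSeries.mk (fun r => lam r (a + b))
      = PowerSeries.mk (fun r => lam r a) * PowerSeries.mk (fun r => lam r b) := by
  ext r
  simp only [PowerSeries.coeff_mk, PowerSeries.coeff_mul, hladd]

lemma mk_lam_zero_eq_one (hl0 : ∀ a : A, lam 0 a = 1)
    (hladd : ∀ (r : ℕ) (a b : A),
      lam r (a + b) = ∑ p ∈ Finset.HasAntidiagonal.antidiagonal r, lam p.1 a * lam p.2 b) :
    PowerSeries.mk (fun r => lam r 0) = 1 := by
  have hunit : IsUnit (PowerSeries.mk fun r => lam r 0) := by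
    rw [PowerSeries.isUnit_iff_constantCoeff, ← PowerSeries.coeff_zero_eq_constantCoeff_apply,
      PowerSeries.coeff_mk, hl0]
    exact isUnit_one
  refine hunit.mul_left_cancel ?_
  rw [mul_one, ← mk_lam_add_eq_mul hladd, add_zero]

lemma sig_eq_neg_one_pow_mul_lam {sig : ℕ → A → A} (hl0 : ∀ a : A, lam 0 a = 1)
    (hladd : ∀ (r : ℕ) (a b : A),
      lam r (a + b) = ∑ p ∈ Finset.HasAntidiagonal.antidiagonal r, lam p.1 a * lam p.2 b)
    (hsig : ∀ a : A,
      (PowerSeries.mk fun r => sig r a) * (PowerSeries.mk fun r => (-1 : A) ^ r * lam r a) = 1)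
    (r : ℕ) (a : A) :
    sig r a = (-1) ^ r * lam r (-a) := by
  have hinv : (PowerSeries.mk fun r => (-1 : A) ^ r * lam r a)
      * (PowerSeries.mk fun r => (-1 : A) ^ r * lam r (-a)) = 1 := by
    rw [← PowerSeries.rescale_mk, ← PowerSeries.rescale_mk, ← map_mul,
      ← mk_lam_add_eq_mul hladd, add_neg_cancel,
      mk_lam_zero_eq_one hl0 hladd, map_one]
  simpa only [PowerSeries.coeff_mk] using
    congrArg (PowerSeries.coeff r) (left_inv_eq_right_inv (hsig a) hinv)

end LambdaSeries

theorem special_sigma_composition_general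
    (A : Type*) [CommRing A] (lam sig : ℕ → A → A)
    (hl0 : ∀ a : A, lam 0 a = 1)
    (hladd : ∀ (r : ℕ) (a b : A),
      lam r (a + b) = ∑ p ∈ Finset.HasAntidiagonal.antidiagonal r, lam p.1 a * lam p.2 b)
    (hsig : ∀ a : A,
      (PowerSeries.mk fun r => sig r a) * (PowerSeries.mk fun r => (-1 : A) ^ r * lam r a) = 1)
    (Pc : (m r : ℕ) → MvPolynomial (Fin (m * r)) ℤ)
    (hPc : ∀ (m r N : ℕ), m * r ≤ N →
      aeval (fun i : Fin (m * r) => esymm (Fin N) ℤ (i + 1)) (Pc m r)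
        = (∏ S ∈ powersetCard r (univ : Finset (Fin N)),
            (Polynomial.C ((∏ i ∈ S, X i : MvPolynomial (Fin N) ℤ)) *
              Polynomial.X + 1)).coeff m)
    (hspecial_comp : ∀ (x : A) (m r : ℕ),
      lam m (lam r x) = eval₂ (Int.castRingHom A)
        (fun i : Fin (m * r) => lam (i + 1) x) (Pc m r)) :
    ∀ (x : A) (m n : ℕ), 1 ≤ n →
      (Odd n → sig m (sig n x) = eval₂ (Int.castRingHom A)
        (fun i : Fin (m * n) => sig (i + 1) x) (Pc m n)) ∧
      (Even n → lam m (sig n x) = eval₂ (Int.castRingHom A)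
        (fun i : Fin (m * n) => sig (i + 1) x) (Pc m n)) := by
  intro x m n _
  have hsigma := sig_eq_neg_one_pow_mul_lam hl0 hladd hsig
  have hPc_sign := aeval_neg_one_pow_mul_eq_of_aeval_neg_X_aeval_esymm (Pc m n)
    (by rw [hPc m n _ le_rfl, aeval_neg_X_coeff_prod_powersetCard])
    (fun i : Fin (m * n) => lam ((i : ℕ) + 1) (-x))
  have hrhs : eval₂ (Int.castRingHom A) (fun i : Fin (m * n) => sig (i + 1) x) (Pc m n)
      = (-1) ^ (m * n) * lam m (lam n (-x)) := by
    simpa only [hsigma, hspecial_comp, ← algebraMap_int_eq, ← aeval_def] using hPc_sign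
  refine ⟨fun hn => ?_, fun hn => ?_⟩
  · rw [hrhs, hsigma, hsigma, hn.neg_one_pow, pow_mul', hn.neg_one_pow, neg_one_mul, neg_neg]
  · rw [hrhs, hsigma, hn.neg_one_pow, one_mul, pow_mul', hn.neg_one_pow, one_pow, one_mul]

/-- In a special λ-ring `A` with opposite operations `σ^r`: for `n` odd,
`σ^m(σ^n(x)) = P_{m,n}(σ¹(x),…,σ^{mn}(x))`, and for `n` even,
`λ^m(σ^n(x)) = P_{m,n}(σ¹(x),…,σ^{mn}(x))`, with `P_{m,n}` the universal polynomial
given by the coefficient of `t^m` in `∏_{i_1<…<i_n≤N} (1 + ξ_{i_1}⋯ξ_{i_n} t)` written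
in elementary symmetric polynomials (`N ≥ mn`), where `P_n` is the universal polynomial
given by the coefficient of `tⁿ` in `∏_{i,j≤N} (1 + ξ_i x_j t)` written in the elementary
symmetric polynomials of the `ξ`'s and of the `x`'s (`N ≥ n`).

The λ-ring structure `lam`, its opposite `sig` (characterized by `σ_t(a)·λ_{−t}(a) = 1`),
and the universal polynomials `P r` (for specialness of multiplication) and `Pc m r`
(for specialness of composition), with their defining properties, are hypothesized. -/
theorem special_sigma_composition
    (A : Type*) [CommRing A] (lam sig : ℕ → A → A)
    (hl0 : ∀ a : A, lam 0 a = 1) (hl1 : ∀ a : A, lam 1 a = a)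
    (hladd : ∀ (r : ℕ) (a b : A),
      lam r (a + b) = ∑ p ∈ Finset.HasAntidiagonal.antidiagonal r, lam p.1 a * lam p.2 b)
    (hsig : ∀ a : A,
      (PowerSeries.mk fun r => sig r a) * (PowerSeries.mk fun r => (-1 : A) ^ r * lam r a) = 1)
    (P : (r : ℕ) → MvPolynomial (Fin r ⊕ Fin r) ℤ)
    (hP : ∀ (r N : ℕ), r ≤ N →
      aeval (Sum.elim
          (fun i : Fin r => rename Sum.inl (esymm (Fin N) ℤ (i + 1)))
          (fun j : Fin r => rename Sum.inr (esymm (Fin N) ℤ (j + 1)))) (P r)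
        = (∏ i : Fin N, ∏ j : Fin N,
            (Polynomial.C ((X (Sum.inl i) * X (Sum.inr j) : MvPolynomial (Fin N ⊕ Fin N) ℤ)) *
              Polynomial.X + 1)).coeff r)
    (Pc : (m r : ℕ) → MvPolynomial (Fin (m * r)) ℤ)
    (hPc : ∀ (m r N : ℕ), m * r ≤ N →
      aeval (fun i : Fin (m * r) => esymm (Fin N) ℤ (i + 1)) (Pc m r)
        = (∏ S ∈ powersetCard r (univ : Finset (Fin N)),
            (Polynomial.C ((∏ i ∈ S, X i : MvPolynomial (Fin N) ℤ)) *
              Polynomial.X + 1)).coeff m)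
    (hspecial_mul : ∀ (x y : A) (r : ℕ),
      lam r (x * y) = eval₂ (Int.castRingHom A)
        (Sum.elim (fun i : Fin r => lam (i + 1) x) (fun j : Fin r => lam (j + 1) y)) (P r))
    (hspecial_comp : ∀ (x : A) (m r : ℕ),
      lam m (lam r x) = eval₂ (Int.castRingHom A)
        (fun i : Fin (m * r) => lam (i + 1) x) (Pc m r)) :
    ∀ (x : A) (m n : ℕ), 1 ≤ n →
      (Odd n → sig m (sig n x) = eval₂ (Int.castRingHom A)
        (fun i : Fin (m * n) => sig (i + 1) x) (Pc m n)) ∧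
      (Even n → lam m (sig n x) = eval₂ (Int.castRingHom A)
        (fun i : Fin (m * n) => sig (i + 1) x) (Pc m n)) :=
  special_sigma_composition_general A lam sig hl0 hladd hsig Pc hPc hspecial_comp
end
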